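/- Let A, B ∈ ℂ^{m×n}, Δ = A⊗B − B⊗A, and Δ₂₁ = U^m Δ (V^n)ᵀ where V^n and U^m are the symmetric and skew-symmetric compression blocks. Then Δ has full column rank if and only if Δ₂₁ has full column rank. Moreover, if the null space of Δ₂₁ is nonzero, it contains a vector of the form V^n(x⊗x) for some nonzero x ∈ ℂⁿ. -/

import Mathlib

open Matrix Kronecker

/-- The commutation matrix `K^n` (over ℂ). -/
def commMat (n : ℕ) : Matrix (Fin n × Fin n) (Fin n × Fin n) ℂ :=
  fun p q => if q = (p.2, p.1) then 1 else 0

/-- The symmetric projection `H^n = (1/2)(I + K^n)`. -/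
noncomputable def symProj (n : ℕ) : Matrix (Fin n × Fin n) (Fin n × Fin n) ℂ :=
  (2 : ℂ)⁻¹ • (1 + commMat n)

/-- The skew-symmetric projection `F^n = (1/2)(I − K^n)`. -/
noncomputable def skewProj (n : ℕ) : Matrix (Fin n × Fin n) (Fin n × Fin n) ℂ :=
  (2 : ℂ)⁻¹ • (1 - commMat n)

/-- Index set for strictly lower triangular positions (cardinality `n(n-1)/2`). -/
def LowIdx (n : ℕ) := {p : Fin n × Fin n // p.1 < p.2}

instance (n : ℕ) : Fintype (LowIdx n) := by unfold LowIdx; infer_instance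
instance (n : ℕ) : DecidableEq (LowIdx n) := by unfold LowIdx; infer_instance

/-- The diagonal selection matrix `S_D^n`. -/
def selD (n : ℕ) : Matrix (Fin n) (Fin n × Fin n) ℂ :=
  fun i q => if q = (i, i) then 1 else 0

/-- The strictly-lower-triangular selection matrix `S_L^n`. -/
def selL (n : ℕ) : Matrix (LowIdx n) (Fin n × Fin n) ℂ :=
  fun k q => if q = k.val then 1 else 0

/-- The strictly-upper-triangular selection matrix `S_U^n`. -/
def selU (n : ℕ) : Matrix (LowIdx n) (Fin n × Fin n) ℂ :=
  fun k q => if q = (k.val.2, k.val.1) then 1 else 0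

/-- The symmetric compression block `V^n = [S_D; √2 S_L] H^n`,
with `n(n+1)/2` rows. -/
noncomputable def Vblock (n : ℕ) :
    Matrix (Fin n ⊕ LowIdx n) (Fin n × Fin n) ℂ :=
  fromRows (selD n) ((Real.sqrt 2 : ℂ) • selL n) * symProj n

/-- The skew-symmetric compression block `U^m = −√2 S_U^m F^m`,
with `m(m-1)/2` rows. -/
noncomputable def Ublock (m : ℕ) :
    Matrix (LowIdx m) (Fin m × Fin m) ℂ :=
  (-(Real.sqrt 2 : ℂ)) • (selU m * skewProj m)


/-- Kronecker product of two vectors. -/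
def kronVec {n : ℕ} (x y : Fin n → ℂ) : Fin n × Fin n → ℂ := fun p => x p.1 * y p.2

/-!
Write `Δ = A ⊗ B − B ⊗ A`. Since `ΔK = −KΔ` for the commutation matrices, `Δ` maps symmetric
vectors to skew-symmetric ones, and as `[V; U]` is orthogonal, `Δ₂₁ = U Δ Vᵀ` is `Δ` restricted
to symmetric vectors, read in orthonormal coordinates. So `Δ₂₁` is injective as soon as `Δ` is,
and the converse reduces to: if `Δ` kills a nonzero vector, it kills some symmetric `x ⊗ x ≠ 0`.

For that, suppose `Ax` and `Bx` are independent for every `x ≠ 0`, i.e. `B` and all `A − cB` are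
injective, and let `Δ vec Z = 0`, i.e. `A Z Bᵀ = B Z Aᵀ`. Put `N = ker Z ∩ ker Zᵀ`. If `N ≠ ℂⁿ`,
the maps `ℂᵐ → ℂⁿ/N` induced by `Aᵀ` and by the surjection `Bᵀ` have a generalized eigenvector:
some `φ` with `Bᵀφ ∉ N` and `(A − cB)ᵀφ ∈ N`. But the relation, which also holds with `A − cB`
in place of `A`, lets the injective `A − cB` transport membership in `N` from `(A − cB)ᵀφ` to
`Bᵀφ`. Hence `N = ℂⁿ`, i.e. `Z = 0`.
-/

open Matrix Kronecker

theorem LinearMap.exists_apply_eq_smul_of_surjective {K V W : Type*} [Field K] [IsAlgClosed K]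
    [AddCommGroup V] [Module K V] [AddCommGroup W] [Module K W] [FiniteDimensional K W]
    [Nontrivial W] (f : V →ₗ[K] W) {g : V →ₗ[K] W} (hg : Function.Surjective g) :
    ∃ (c : K) (v : V), g v ≠ 0 ∧ f v = c • g v := by
  obtain ⟨s, hs⟩ := g.exists_rightInverse_of_surjective (range_eq_top.mpr hg)
  have hgs (w : W) : g (s w) = w := LinearMap.congr_fun hs w
  obtain ⟨c, hc⟩ := Module.End.exists_eigenvalue (f ∘ₗ s)
  obtain ⟨w, hw⟩ := hc.exists_hasEigenvector
  exact ⟨c, s w, by simpa [hgs] using hw.2, by rw [hgs, ← hw.apply_eq_smul]; rfl⟩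

namespace Matrix

variable {R K m n : Type*} [Fintype n]

theorem mulVec_injective_iff_forall [CommRing R] {M : Matrix m n R} :
    Function.Injective M.mulVec ↔ ∀ v, M *ᵥ v = 0 → v = 0 := by
  rw [← coe_mulVecLin]
  exact injective_iff_map_eq_zero _

theorem kronecker_sub_mulVec_vec [CommRing R] (A B : Matrix m n R) (Z : Matrix n n R) :
    (A ⊗ₖ B - B ⊗ₖ A) *ᵥ vec Z = vec (B * Z * Aᵀ - A * Z * Bᵀ) := by
  rw [sub_mulVec, kronecker_mulVec_vec, kronecker_mulVec_vec, vec_sub]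

variable [Fintype m]

theorem mulVec_transpose_eq_zero_of_mul_mul_transpose_eq [CommRing R] {C D : Matrix m n R}
    {Z : Matrix n n R} (hC : Function.Injective C.mulVec) (h : C * Z * Dᵀ = D * Z * Cᵀ)
    {φ : m → R} (hφ : Z *ᵥ (Cᵀ *ᵥ φ) = 0) : Z *ᵥ (Dᵀ *ᵥ φ) = 0 :=
  hC <| by rw [mulVec_mulVec, mulVec_mulVec, h, ← mulVec_mulVec, ← mulVec_mulVec, hφ,
    mulVec_zero, mulVec_zero]

variable [Field K]

theorem transpose_mulVec_surjective {B : Matrix m n K} (hB : Function.Injective B.mulVec) :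
    Function.Surjective Bᵀ.mulVec := by
  rw [← coe_mulVecLin, ← LinearMap.range_eq_top]
  apply Submodule.eq_top_of_finrank_eq
  rw [← rank, rank_transpose, rank, LinearMap.finrank_range_of_inj hB, Module.finrank_pi]

theorem eq_zero_of_mul_mul_transpose_eq [IsAlgClosed K] {A B : Matrix m n K}
    (hB : Function.Injective B.mulVec) (hAB : ∀ c : K, Function.Injective (A - c • B).mulVec)
    {Z : Matrix n n K} (h : A * Z * Bᵀ = B * Z * Aᵀ) : Z = 0 := by
  set N := LinearMap.ker Z.mulVecLin ⊓ LinearMap.ker Zᵀ.mulVecLin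
  have hN : N = ⊤ := by
    by_contra hN
    have : Nontrivial ((n → K) ⧸ N) := Submodule.Quotient.nontrivial_iff.mpr hN
    obtain ⟨c, φ, hφ, hc⟩ := LinearMap.exists_apply_eq_smul_of_surjective
      (N.mkQ ∘ₗ Aᵀ.mulVecLin) (g := N.mkQ ∘ₗ Bᵀ.mulVecLin)
      (N.mkQ_surjective.comp (transpose_mulVec_surjective hB))
    have hrel : (A - c • B) * Z * Bᵀ = B * Z * (A - c • B)ᵀ := by
      rw [transpose_sub, transpose_smul, Matrix.sub_mul, Matrix.sub_mul, Matrix.mul_sub, h,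
        Matrix.smul_mul, Matrix.smul_mul, Matrix.mul_smul]
    have hrelT : (A - c • B) * Zᵀ * Bᵀ = B * Zᵀ * (A - c • B)ᵀ := by
      simpa [transpose_mul, Matrix.mul_assoc] using (congrArg transpose hrel).symm
    have hCφ : (A - c • B)ᵀ *ᵥ φ ∈ N := by
      rw [← Submodule.Quotient.mk_eq_zero, transpose_sub, transpose_smul, sub_mulVec,
        smul_mulVec, Submodule.Quotient.mk_sub, Submodule.Quotient.mk_smul, sub_eq_zero]
      exact hc
    have hBφ : Bᵀ *ᵥ φ ∈ N :=
      ⟨mulVec_transpose_eq_zero_of_mul_mul_transpose_eq (hAB c) hrel hCφ.1,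
        mulVec_transpose_eq_zero_of_mul_mul_transpose_eq (hAB c) hrelT hCφ.2⟩
    exact hφ ((Submodule.Quotient.mk_eq_zero N).mpr hBφ)
  classical
  ext i j
  simpa using congrFun ((hN ▸ Submodule.mem_top : Pi.single j 1 ∈ N).1) i

end Matrix

theorem ofReal_sqrt_two_mul_self : (Real.sqrt 2 : ℂ) * Real.sqrt 2 = 2 := by
  rw [← Complex.ofReal_mul, Real.mul_self_sqrt zero_le_two, Complex.ofReal_ofNat]

section Projections

variable {n : ℕ}

theorem commMat_mulVec (v : Fin n × Fin n → ℂ) : commMat n *ᵥ v = v ∘ Prod.swap := by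
  ext p
  simp [mulVec, dotProduct, commMat, Prod.swap]

theorem commMat_transpose : (commMat n)ᵀ = commMat n := by
  ext p q
  simp only [transpose_apply, commMat, Prod.ext_iff]
  grind

theorem symProj_mulVec_apply (v : Fin n × Fin n → ℂ) (p : Fin n × Fin n) :
    (symProj n *ᵥ v) p = 2⁻¹ * (v p + v p.swap) := by
  rw [symProj, smul_mulVec, add_mulVec, one_mulVec, commMat_mulVec]
  rfl

theorem skewProj_mulVec_apply (v : Fin n × Fin n → ℂ) (p : Fin n × Fin n) :
    (skewProj n *ᵥ v) p = 2⁻¹ * (v p - v p.swap) := by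
  rw [skewProj, smul_mulVec, sub_mulVec, one_mulVec, commMat_mulVec]
  rfl

theorem symProj_transpose : (symProj n)ᵀ = symProj n := by
  rw [symProj, transpose_smul, transpose_add, transpose_one, commMat_transpose]

theorem skewProj_transpose : (skewProj n)ᵀ = skewProj n := by
  rw [skewProj, transpose_smul, transpose_sub, transpose_one, commMat_transpose]

theorem symProj_mul_self : symProj n * symProj n = symProj n :=
  ext_iff_mulVec.2 fun v => by
    ext p
    rw [← mulVec_mulVec, symProj_mulVec_apply, symProj_mulVec_apply, symProj_mulVec_apply,
      Prod.swap_swap]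
    ring

theorem symProj_mulVec_kronVec_self (x : Fin n → ℂ) : symProj n *ᵥ kronVec x x = kronVec x x := by
  ext p
  rw [symProj_mulVec_apply]
  simp only [kronVec, Prod.fst_swap, Prod.snd_swap]
  ring

end Projections

namespace LowIdx

variable {n : ℕ} (k l : LowIdx n) (i : Fin n)

theorem val_inj : k.1 = l.1 ↔ k = l := Subtype.val_inj

theorem val_ne_diag : k.1 ≠ (i, i) := by
  intro h
  have hk : k.1.1 < k.1.2 := k.2
  rw [h] at hk
  exact lt_irrefl i hk

theorem diag_ne_val : (i, i) ≠ k.1 := (val_ne_diag k i).symm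

theorem swap_ne_diag : k.1.swap ≠ (i, i) :=
  fun h => val_ne_diag k i (by simpa using congrArg Prod.swap h)

theorem swap_ne_val : k.1.swap ≠ l.1 := by
  intro h
  have hl : l.1.1 < l.1.2 := l.2
  rw [← h] at hl
  exact lt_asymm k.2 hl

end LowIdx

theorem eq_diag_or_lowIdx_or_swap {n : ℕ} (p : Fin n × Fin n) :
    (∃ i, p = (i, i)) ∨ (∃ k : LowIdx n, p = k.1) ∨ ∃ k : LowIdx n, p = k.1.swap := by
  rcases lt_trichotomy p.1 p.2 with h | h | h
  · exact .inr (.inl ⟨⟨p, h⟩, rfl⟩)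
  · exact .inl ⟨p.1, Prod.ext rfl h.symm⟩
  · exact .inr (.inr ⟨⟨p.swap, h⟩, rfl⟩)

section Blocks

variable {n : ℕ}

variable (n) in
noncomputable def symSel : Matrix (Fin n ⊕ LowIdx n) (Fin n × Fin n) ℂ :=
  fromRows (selD n) ((Real.sqrt 2 : ℂ) • selL n)

theorem Vblock_eq : Vblock n = symSel n * symProj n := rfl

theorem symSel_mulVec_inl (v : Fin n × Fin n → ℂ) (i : Fin n) :
    (symSel n *ᵥ v) (.inl i) = v (i, i) := by
  simp [symSel, mulVec, dotProduct, selD]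

theorem symSel_mulVec_inr (v : Fin n × Fin n → ℂ) (k : LowIdx n) :
    (symSel n *ᵥ v) (.inr k) = Real.sqrt 2 * v k.1 := by
  simp [symSel, mulVec, dotProduct, selL]

theorem symSel_transpose_mulVec_diag (y : Fin n ⊕ LowIdx n → ℂ) (i : Fin n) :
    ((symSel n)ᵀ *ᵥ y) (i, i) = y (.inl i) := by
  simp [symSel, mulVec, dotProduct, selD, selL, Fintype.sum_sum_type, LowIdx.diag_ne_val]

theorem symSel_transpose_mulVec_val (y : Fin n ⊕ LowIdx n → ℂ) (k : LowIdx n) :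
    ((symSel n)ᵀ *ᵥ y) k.1 = Real.sqrt 2 * y (.inr k) := by
  simp [symSel, mulVec, dotProduct, selD, selL, Fintype.sum_sum_type, LowIdx.val_inj,
    LowIdx.val_ne_diag]

theorem symSel_transpose_mulVec_swap (y : Fin n ⊕ LowIdx n → ℂ) (k : LowIdx n) :
    ((symSel n)ᵀ *ᵥ y) k.1.swap = 0 := by
  simp [symSel, mulVec, dotProduct, selD, selL, Fintype.sum_sum_type, LowIdx.swap_ne_diag,
    LowIdx.swap_ne_val]

theorem Vblock_mul_transpose : Vblock n * (Vblock n)ᵀ = 1 :=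
  ext_iff_mulVec.2 fun y => by
    rw [Vblock_eq, transpose_mul, symProj_transpose, Matrix.mul_assoc,
      ← Matrix.mul_assoc (symProj n), symProj_mul_self, one_mulVec, ← mulVec_mulVec,
      ← mulVec_mulVec]
    ext (i | k)
    · rw [symSel_mulVec_inl, symProj_mulVec_apply, Prod.swap_prod_mk,
        symSel_transpose_mulVec_diag]
      ring
    · rw [symSel_mulVec_inr, symProj_mulVec_apply, symSel_transpose_mulVec_val,
        symSel_transpose_mulVec_swap]
      linear_combination (2⁻¹ * y (.inr k)) * ofReal_sqrt_two_mul_self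

theorem transpose_Vblock_mul : (Vblock n)ᵀ * Vblock n = symProj n :=
  ext_iff_mulVec.2 fun v => by
    rw [Vblock_eq, transpose_mul, symProj_transpose, ← mulVec_mulVec, ← mulVec_mulVec,
      ← mulVec_mulVec]
    have hs (p : Fin n × Fin n) : (symProj n *ᵥ v) p.swap = (symProj n *ᵥ v) p := by
      rw [symProj_mulVec_apply, symProj_mulVec_apply, Prod.swap_swap, add_comm]
    set s := symProj n *ᵥ v
    ext p
    rw [symProj_mulVec_apply]
    rcases eq_diag_or_lowIdx_or_swap p with ⟨i, rfl⟩ | ⟨k, rfl⟩ | ⟨k, rfl⟩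
    · rw [Prod.swap_prod_mk, symSel_transpose_mulVec_diag, symSel_mulVec_inl]
      ring
    · rw [symSel_transpose_mulVec_val, symSel_transpose_mulVec_swap, symSel_mulVec_inr]
      linear_combination (2⁻¹ * s k.1) * ofReal_sqrt_two_mul_self
    · rw [Prod.swap_swap, symSel_transpose_mulVec_swap, symSel_transpose_mulVec_val,
        symSel_mulVec_inr, hs]
      linear_combination (2⁻¹ * s k.1) * ofReal_sqrt_two_mul_self

theorem Vblock_mulVec_kronVec_self_ne_zero {x : Fin n → ℂ} (hx : x ≠ 0) :
    Vblock n *ᵥ kronVec x x ≠ 0 := by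
  intro h
  obtain ⟨i, hi⟩ := Function.ne_iff.mp hx
  have hxx := congrFun (congrArg ((Vblock n)ᵀ *ᵥ ·) h) (i, i)
  rw [mulVec_mulVec, transpose_Vblock_mul, symProj_mulVec_kronVec_self, mulVec_zero] at hxx
  exact hi (mul_self_eq_zero.mp hxx)

theorem selU_mulVec_apply (v : Fin n × Fin n → ℂ) (k : LowIdx n) :
    (selU n *ᵥ v) k = v k.1.swap := by
  simp [mulVec, dotProduct, selU, Prod.swap]

theorem selU_transpose_mulVec_swap (u : LowIdx n → ℂ) (k : LowIdx n) :
    ((selU n)ᵀ *ᵥ u) k.1.swap = u k := by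
  simp only [mulVec, dotProduct, transpose_apply, selU, ite_mul, one_mul, zero_mul]
  exact (Fintype.sum_eq_single k fun l hl => if_neg fun h => hl (Subtype.ext (by
    simpa [Prod.ext_iff, and_comm, eq_comm] using h))).trans (if_pos rfl)

theorem selU_transpose_mulVec_of_not_lt (u : LowIdx n → ℂ) {p : Fin n × Fin n}
    (hp : ¬p.2 < p.1) : ((selU n)ᵀ *ᵥ u) p = 0 := by
  simp only [mulVec, dotProduct, transpose_apply, selU, ite_mul, one_mul, zero_mul]
  exact Finset.sum_eq_zero fun k _ => if_neg fun (h : p = k.1.swap) => hp (h ▸ k.2)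

theorem transpose_Ublock_mul : (Ublock n)ᵀ * Ublock n = skewProj n :=
  ext_iff_mulVec.2 fun v => by
    rw [Ublock, transpose_smul, transpose_mul, skewProj_transpose, Matrix.smul_mul,
      Matrix.mul_smul, smul_smul, neg_mul_neg, ofReal_sqrt_two_mul_self, smul_mulVec,
      ← mulVec_mulVec, ← mulVec_mulVec, ← mulVec_mulVec]
    have hw (p : Fin n × Fin n) : (skewProj n *ᵥ v) p.swap = -(skewProj n *ᵥ v) p := by
      rw [skewProj_mulVec_apply, skewProj_mulVec_apply, Prod.swap_swap]
      ring
    set w := skewProj n *ᵥ v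
    ext p
    rw [Pi.smul_apply, skewProj_mulVec_apply, smul_eq_mul]
    rcases eq_diag_or_lowIdx_or_swap p with ⟨i, rfl⟩ | ⟨k, rfl⟩ | ⟨k, rfl⟩
    · have hi := hw (i, i)
      rw [Prod.swap_prod_mk] at hi
      rw [Prod.swap_prod_mk, sub_self]
      linear_combination (-2⁻¹ : ℂ) * hi
    · have hk : k.1.1 < k.1.2 := k.2
      rw [selU_transpose_mulVec_of_not_lt _ hk.not_gt, selU_transpose_mulVec_swap,
        selU_mulVec_apply, hw]
      ring
    · have hk : k.1.1 < k.1.2 := k.2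
      rw [Prod.swap_swap, selU_transpose_mulVec_swap, selU_mulVec_apply,
        selU_transpose_mulVec_of_not_lt _ hk.not_gt]
      ring

end Blocks

section Kronecker

variable {m n : ℕ} (A B : Matrix (Fin m) (Fin n) ℂ)

theorem kronecker_mulVec_kronVec (x y : Fin n → ℂ) :
    (A ⊗ₖ B) *ᵥ kronVec x y = kronVec (A *ᵥ x) (B *ᵥ y) := by
  ext p
  simp [kronVec, mulVec, dotProduct, Fintype.sum_prod_type, Finset.sum_mul_sum, mul_mul_mul_comm]

theorem exists_kronVec_self_of_kronecker_sub_mulVec_eq_zero {z : Fin n × Fin n → ℂ}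
    (hz : (A ⊗ₖ B - B ⊗ₖ A) *ᵥ z = 0) (hz0 : z ≠ 0) :
    ∃ x : Fin n → ℂ, x ≠ 0 ∧ (A ⊗ₖ B - B ⊗ₖ A) *ᵥ kronVec x x = 0 := by
  by_contra! hx
  have hΔ (x : Fin n → ℂ) : (A ⊗ₖ B - B ⊗ₖ A) *ᵥ kronVec x x =
      kronVec (A *ᵥ x) (B *ᵥ x) - kronVec (B *ᵥ x) (A *ᵥ x) := by
    rw [sub_mulVec, kronecker_mulVec_kronVec, kronecker_mulVec_kronVec]
  have hB : Function.Injective B.mulVec := mulVec_injective_iff_forall.2 fun x hBx => by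
    by_contra h
    exact hx x h (by rw [hΔ, hBx]; ext; simp [kronVec])
  have hAB (c : ℂ) : Function.Injective (A - c • B).mulVec := mulVec_injective_iff_forall.2
    fun x hABx => by
      rw [sub_mulVec, smul_mulVec, sub_eq_zero] at hABx
      by_contra h
      exact hx x h (by
        rw [hΔ, hABx]
        ext
        simp only [Pi.sub_apply, kronVec, Pi.smul_apply, smul_eq_mul, Pi.zero_apply]
        ring)
  set Z : Matrix (Fin n) (Fin n) ℂ := of fun i j => z (j, i)
  have hZ : vec Z = z := rfl
  rw [← hZ, kronecker_sub_mulVec_vec, vec_eq_zero_iff, sub_eq_zero] at hz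
  exact hz0 (by rw [← hZ, eq_zero_of_mul_mul_transpose_eq hB hAB hz.symm, vec_zero])

theorem kronecker_sub_mul_commMat :
    (A ⊗ₖ B - B ⊗ₖ A) * commMat n = -(commMat m * (A ⊗ₖ B - B ⊗ₖ A)) :=
  ext_iff_mulVec.2 fun v => by
    rw [← mulVec_mulVec, neg_mulVec, ← mulVec_mulVec, commMat_mulVec, commMat_mulVec]
    ext p
    simp only [mulVec, dotProduct, Fintype.sum_prod_type, Function.comp_apply, Pi.neg_apply,
      Matrix.sub_apply, kroneckerMap_apply]
    rw [Finset.sum_comm, ← Finset.sum_neg_distrib]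
    refine Finset.sum_congr rfl fun _ _ => ?_
    rw [← Finset.sum_neg_distrib]
    refine Finset.sum_congr rfl fun _ _ => ?_
    simp only [Prod.fst_swap, Prod.snd_swap, Prod.swap_prod_mk]
    ring

theorem kronecker_sub_mul_symProj :
    (A ⊗ₖ B - B ⊗ₖ A) * symProj n = skewProj m * (A ⊗ₖ B - B ⊗ₖ A) := by
  rw [symProj, skewProj, Matrix.mul_smul, Matrix.smul_mul, Matrix.mul_add, Matrix.mul_one,
    kronecker_sub_mul_commMat, Matrix.sub_mul, Matrix.one_mul, ← sub_eq_add_neg]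

theorem transpose_Ublock_mul_compression :
    (Ublock m)ᵀ * (Ublock m * (A ⊗ₖ B - B ⊗ₖ A) * (Vblock n)ᵀ) =
      (A ⊗ₖ B - B ⊗ₖ A) * (Vblock n)ᵀ := by
  calc (Ublock m)ᵀ * (Ublock m * (A ⊗ₖ B - B ⊗ₖ A) * (Vblock n)ᵀ)
      = skewProj m * (A ⊗ₖ B - B ⊗ₖ A) * (Vblock n)ᵀ := by
        rw [← transpose_Ublock_mul, Matrix.mul_assoc, Matrix.mul_assoc, Matrix.mul_assoc]
    _ = (A ⊗ₖ B - B ⊗ₖ A) * ((Vblock n)ᵀ * (Vblock n * (Vblock n)ᵀ)) := by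
        rw [← kronecker_sub_mul_symProj, ← transpose_Vblock_mul, Matrix.mul_assoc,
          Matrix.mul_assoc]
    _ = (A ⊗ₖ B - B ⊗ₖ A) * (Vblock n)ᵀ := by rw [Vblock_mul_transpose, Matrix.mul_one]

theorem compression_mulVec_eq_zero_iff (y : Fin n ⊕ LowIdx n → ℂ) :
    (Ublock m * (A ⊗ₖ B - B ⊗ₖ A) * (Vblock n)ᵀ) *ᵥ y = 0 ↔
      (A ⊗ₖ B - B ⊗ₖ A) *ᵥ ((Vblock n)ᵀ *ᵥ y) = 0 := by
  constructor
  · intro h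
    rw [mulVec_mulVec, ← transpose_Ublock_mul_compression, ← mulVec_mulVec, h, mulVec_zero]
  · intro h
    rw [Matrix.mul_assoc, ← mulVec_mulVec, ← mulVec_mulVec, h, mulVec_zero]

theorem compression_mulVec_Vblock_mulVec_kronVec_self (x : Fin n → ℂ) :
    (Ublock m * (A ⊗ₖ B - B ⊗ₖ A) * (Vblock n)ᵀ) *ᵥ (Vblock n *ᵥ kronVec x x) =
      Ublock m *ᵥ ((A ⊗ₖ B - B ⊗ₖ A) *ᵥ kronVec x x) := by
  rw [mulVec_mulVec, Matrix.mul_assoc, transpose_Vblock_mul, Matrix.mul_assoc, ← mulVec_mulVec,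
    ← mulVec_mulVec, symProj_mulVec_kronVec_self]

theorem exists_compression_mulVec_Vblock_mulVec_kronVec_self_eq_zero
    {z : Fin n × Fin n → ℂ} (hz : (A ⊗ₖ B - B ⊗ₖ A) *ᵥ z = 0) (hz0 : z ≠ 0) :
    ∃ x : Fin n → ℂ, x ≠ 0 ∧
      (Ublock m * (A ⊗ₖ B - B ⊗ₖ A) * (Vblock n)ᵀ) *ᵥ (Vblock n *ᵥ kronVec x x) = 0 := by
  obtain ⟨x, hx, hΔx⟩ := exists_kronVec_self_of_kronecker_sub_mulVec_eq_zero A B hz hz0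
  exact ⟨x, hx, by rw [compression_mulVec_Vblock_mulVec_kronVec_self, hΔx, mulVec_zero]⟩

end Kronecker

theorem stmt_19 {m n : ℕ} (A B : Matrix (Fin m) (Fin n) ℂ) :
    (Function.Injective (A ⊗ₖ B - B ⊗ₖ A).mulVec ↔
      Function.Injective (Ublock m * (A ⊗ₖ B - B ⊗ₖ A) * (Vblock n)ᵀ).mulVec) ∧
    ((∃ y : Fin n ⊕ LowIdx n → ℂ, y ≠ 0 ∧
        (Ublock m * (A ⊗ₖ B - B ⊗ₖ A) * (Vblock n)ᵀ).mulVec y = 0) →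
      ∃ x : Fin n → ℂ, x ≠ 0 ∧
        (Ublock m * (A ⊗ₖ B - B ⊗ₖ A) * (Vblock n)ᵀ).mulVec
          ((Vblock n).mulVec (kronVec x x)) = 0) := by
  have hV : ∀ y, (Vblock n)ᵀ *ᵥ y = 0 → y = 0 := fun y hy => by
    simpa [mulVec_mulVec, Vblock_mul_transpose] using congrArg (Vblock n *ᵥ ·) hy
  simp only [mulVec_injective_iff_forall]
  refine ⟨⟨fun hΔ y hy => hV y (hΔ _ ((compression_mulVec_eq_zero_iff A B y).1 hy)),
    fun hΔ₂₁ z hz => ?_⟩, fun ⟨y, hy0, hy⟩ => ?_⟩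
  · by_contra hz0
    obtain ⟨x, hx, hΔ₂₁x⟩ := exists_compression_mulVec_Vblock_mulVec_kronVec_self_eq_zero A B hz hz0
    exact Vblock_mulVec_kronVec_self_ne_zero hx (hΔ₂₁ _ hΔ₂₁x)
  · exact exists_compression_mulVec_Vblock_mulVec_kronVec_self_eq_zero A B
      ((compression_mulVec_eq_zero_iff A B y).1 hy) fun h => hy0 (hV y h)
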